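/- arXiv:1112.1632 — 2 statements merged into one kernel-verified Lean document; each statement's English description precedes it below -/
import Mathlib

section
/- Let F = (f_i)_{i∈I} be a J-frame for a Krein space H, with M₊ = R(T₊) and M₋ = R(T₋). Then there exist constants B₋ ≤ A₋ < 0 < A₊ ≤ B₊ such that A₊[f,f] ≤ Σ_{i∈I₊} |[f, f_i]|² ≤ B₊[f,f] for every f ∈ M₊, and A₋[f,f] ≤ Σ_{i∈I₋} |[f, f_i]|² ≤ B₋[f,f] for every f ∈ M₋. In particular, (f_i)_{i∈I₊} is a frame for the Hilbert space (M₊, [·,·]) and (f_i)_{i∈I₋} is a frame for the Hilbert space (M₋, −[·,·]). -/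
/- Frames for Krein spaces ("J-frames"), following Giribet–Maestripieri–Martínez Pería–Massey.

A Krein space is modelled as a complex Hilbert space `H` together with a fundamental symmetry
`J : H →L[ℂ] H` (selfadjoint, `J ∘L J = 1`); the indefinite inner product is `[x,y] = ⟪J x, y⟫`. -/

noncomputable section

open scoped ComplexInnerProductSpace ComplexOrder
open ContinuousLinearMap

attribute [local instance] Classical.propDecidable

namespace KreinFrames

universe u

variable {H : Type*} [NormedAddCommGroup H] [InnerProductSpace ℂ H]

/-- A subspace `M` is uniformly `J`-positive: `[x,x] ≥ α‖x‖²` on `M` for some `α > 0`. -/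
def UnifJPos (J : H →L[ℂ] H) (M : Submodule ℂ H) : Prop :=
  ∃ α : ℝ, 0 < α ∧ ∀ x ∈ M, α * ‖x‖ ^ 2 ≤ (⟪J x, x⟫).re

/-- A subspace `M` is uniformly `J`-negative: `[x,x] ≤ -α‖x‖²` on `M` for some `α > 0`. -/
def UnifJNeg (J : H →L[ℂ] H) (M : Submodule ℂ H) : Prop :=
  ∃ α : ℝ, 0 < α ∧ ∀ x ∈ M, (⟪J x, x⟫).re ≤ -(α * ‖x‖ ^ 2)

/-- Maximal uniformly `J`-positive subspace. -/
def MaxUnifJPos (J : H →L[ℂ] H) (M : Submodule ℂ H) : Prop :=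
  UnifJPos J M ∧ ∀ M' : Submodule ℂ H, UnifJPos J M' → M ≤ M' → M' = M

/-- Maximal uniformly `J`-negative subspace. -/
def MaxUnifJNeg (J : H →L[ℂ] H) (M : Submodule ℂ H) : Prop :=
  UnifJNeg J M ∧ ∀ M' : Submodule ℂ H, UnifJNeg J M' → M ≤ M' → M' = M

/-- The `J`-orthogonal companion `M^{[⊥]} = {x | [x,m] = 0 ∀ m ∈ M}` of a subspace `M`. -/
def Jorth (J : H →L[ℂ] H) (M : Submodule ℂ H) : Submodule ℂ H where
  carrier := {x | ∀ m ∈ M, ⟪J x, m⟫ = 0}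
  zero_mem' := by intro m _; simp
  add_mem' := by
    intro a b ha hb m hm
    rw [map_add, inner_add_left, ha m hm, hb m hm, add_zero]
  smul_mem' := by
    intro c x hx m hm
    rw [map_smul, inner_smul_left, hx m hm, mul_zero]

/-- `T : ℓ²(I) → H` is the synthesis operator of the family `f`, i.e. `T e_i = f_i`. -/
def IsSynthesis {I : Type*} (f : I → H) (T : lp (fun _ : I => ℂ) 2 →L[ℂ] H) : Prop :=
  ∀ i, T (lp.single 2 i 1) = f i

/-- `f` is a `J`-frame: it is a Bessel family (it admits a bounded synthesis operator `T`),
and the ranges of `T₊ = T P₊` and `T₋ = T P₋` (the synthesis operators of the subfamilies of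
`J`-nonnegative and `J`-negative vectors) are maximal uniformly `J`-positive resp. maximal
uniformly `J`-negative subspaces of `H`. -/
def IsJFrame {I : Type*} (J : H →L[ℂ] H) (f : I → H) : Prop :=
  ∃ T Tp Tm : lp (fun _ : I => ℂ) 2 →L[ℂ] H,
    IsSynthesis f T ∧
    IsSynthesis (fun i => if 0 ≤ (⟪J (f i), f i⟫).re then f i else 0) Tp ∧
    IsSynthesis (fun i => if 0 ≤ (⟪J (f i), f i⟫).re then 0 else f i) Tm ∧
    MaxUnifJPos J (LinearMap.range (Tp : lp (fun _ : I => ℂ) 2 →ₗ[ℂ] H)) ∧ MaxUnifJNeg J (LinearMap.range (Tm : lp (fun _ : I => ℂ) 2 →ₗ[ℂ] H))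

/-- `c₀(M, C)`: supremum of `|⟪m,n⟫|` over unit vectors `m ∈ M` and unit `J`-neutral vectors
`n` (the cone `C = {n | [n,n] = 0}`). -/
def c0 (J : H →L[ℂ] H) (M : Submodule ℂ H) : ℝ :=
  sSup {r : ℝ | ∃ m ∈ M, ∃ n : H, ⟪J n, n⟫ = 0 ∧ ‖m‖ = 1 ∧ ‖n‖ = 1 ∧ r = ‖⟪m, n⟫‖}

/-- Cosine of the Friedrichs angle between two subspaces. -/
def friedrichs (S T : Submodule ℂ H) : ℝ :=
  sSup {r : ℝ | ∃ x ∈ S ⊓ (S ⊓ T)ᗮ, ∃ y ∈ T ⊓ (S ⊓ T)ᗮ, ‖x‖ = 1 ∧ ‖y‖ = 1 ∧ r = ‖⟪x, y⟫‖}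

/-- The reduced minimum modulus `γ(A) = inf {‖Ax‖ : x ∈ N(A)^⊥, ‖x‖ = 1}`. -/
def rmm {E F : Type*} [NormedAddCommGroup E] [InnerProductSpace ℂ E]
    [NormedAddCommGroup F] [InnerProductSpace ℂ F] (A : E →L[ℂ] F) : ℝ :=
  sInf {r : ℝ | ∃ x ∈ (LinearMap.ker (A : E →ₗ[ℂ] F))ᗮ, ‖x‖ = 1 ∧ r = ‖A x‖}

/-- The set `Q` of bounded idempotents with uniformly `J`-positive range and uniformly
`J`-negative kernel. -/
def QSet (J : H →L[ℂ] H) : Set (H →L[ℂ] H) :=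
  {Q | Q ∘L Q = Q ∧ UnifJPos J (LinearMap.range (Q : H →ₗ[ℂ] H)) ∧ UnifJNeg J (LinearMap.ker (Q : H →ₗ[ℂ] H))}

/-- `ℓ²(s)` as a subspace of `ℓ²(I)`, for `s : Set I`. -/
def lpSub {I : Type*} (s : Set I) : Submodule ℂ (lp (fun _ : I => ℂ) 2) where
  carrier := {x | ∀ i ∉ s, x i = 0}
  zero_mem' := by intro i _; simp
  add_mem' := by
    intro a b ha hb i hi
    have h : (↑(a + b) : ∀ _ : I, ℂ) i = a i + b i := by rw [lp.coeFn_add]; rfl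
    rw [h, ha i hi, hb i hi, add_zero]
  smul_mem' := by
    intro c x hx i hi
    have h : (↑(c • x) : ∀ _ : I, ℂ) i = c • (x i : ℂ) := by rw [lp.coeFn_smul]; rfl
    rw [h, hx i hi, smul_zero]

/-- `S` is the `J`-frame operator of some `J`-frame: `S = T T^#` where `T` is the synthesis
operator of a `J`-frame and `T^# = J₂ T* J`. -/
def IsJFrameOperator {H : Type u} [NormedAddCommGroup H] [InnerProductSpace ℂ H]
    [CompleteSpace H] (J S : H →L[ℂ] H) : Prop :=
  ∃ (I : Type u) (f : I → H) (T Tp Tm : lp (fun _ : I => ℂ) 2 →L[ℂ] H)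
    (J2 : lp (fun _ : I => ℂ) 2 →L[ℂ] lp (fun _ : I => ℂ) 2),
    IsSynthesis f T ∧
    IsSynthesis (fun i => if 0 ≤ (⟪J (f i), f i⟫).re then f i else 0) Tp ∧
    IsSynthesis (fun i => if 0 ≤ (⟪J (f i), f i⟫).re then 0 else f i) Tm ∧
    MaxUnifJPos J (LinearMap.range (Tp : lp (fun _ : I => ℂ) 2 →ₗ[ℂ] H)) ∧ MaxUnifJNeg J (LinearMap.range (Tm : lp (fun _ : I => ℂ) 2 →ₗ[ℂ] H)) ∧
    (∀ (x : lp (fun _ : I => ℂ) 2) (i : I),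
      J2 x i = if 0 ≤ (⟪J (f i), f i⟫).re then (x i : ℂ) else -(x i : ℂ)) ∧
    S = T ∘L J2 ∘L adjoint T ∘L J

/-! On a closed uniformly `J`-positive subspace `M = R(A)` the form `[·,·]` is equivalent to the
squared norm, and `∑ |[g, f_i]|² = ‖A* J g‖²` is the squared norm of the analysis operator applied
to `J g`. This is bounded above by `‖A* J‖² ‖g‖²`, and below by the open mapping theorem: writing
`g = A x` with `‖x‖ ≤ C ‖g‖` gives `[g,g] = ⟪A* J g, x⟫ ≤ C ‖A* J g‖ ‖g‖`. The negative subfamily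
is the positive one for the fundamental symmetry `-J`. -/

section

variable {E F : Type*} [NormedAddCommGroup E] [InnerProductSpace ℂ E] [CompleteSpace E]
  [NormedAddCommGroup F] [NormedSpace ℂ F]

lemma unifJNeg_iff_unifJPos_neg (J : H →L[ℂ] H) (M : Submodule ℂ H) :
    UnifJNeg J M ↔ UnifJPos (-J) M := by
  simp only [UnifJNeg, UnifJPos, neg_apply, inner_neg_left, Complex.neg_re, le_neg]

lemma maxUnifJNeg_iff_maxUnifJPos_neg (J : H →L[ℂ] H) (M : Submodule ℂ H) :
    MaxUnifJNeg J M ↔ MaxUnifJPos (-J) M := by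
  simp only [MaxUnifJNeg, MaxUnifJPos, unifJNeg_iff_unifJPos_neg]

lemma UnifJPos.topologicalClosure {J : H →L[ℂ] H} {M : Submodule ℂ H} (h : UnifJPos J M) :
    UnifJPos J M.topologicalClosure := by
  obtain ⟨α, hα, hM⟩ := h
  have hclosed : IsClosed {x : H | α * ‖x‖ ^ 2 ≤ (⟪J x, x⟫).re} :=
    isClosed_le (by fun_prop) (Complex.continuous_re.comp (J.continuous.inner continuous_id))
  refine ⟨α, hα, fun x hx => ?_⟩
  rw [← SetLike.mem_coe, Submodule.topologicalClosure_coe] at hx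
  exact closure_minimal hM hclosed hx

lemma MaxUnifJPos.isClosed {J : H →L[ℂ] H} {M : Submodule ℂ H} (h : MaxUnifJPos J M) :
    IsClosed (M : Set H) := by
  rw [← h.2 _ h.1.topologicalClosure M.le_topologicalClosure]
  exact M.isClosed_topologicalClosure

lemma UnifJPos.exists_norm_sq_le {J : H →L[ℂ] H} {M : Submodule ℂ H} (hM : UnifJPos J M)
    (L : H →L[ℂ] F) : ∃ b : ℝ, ∀ g ∈ M, ‖L g‖ ^ 2 ≤ b * (⟪J g, g⟫).re := by
  obtain ⟨α, hα, hpos⟩ := hM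
  refine ⟨‖L‖ ^ 2 / α, fun g hg => ?_⟩
  have hLg := L.le_opNorm g
  have hJg := hpos g hg
  rw [div_mul_eq_mul_div, le_div_iff₀ hα]
  calc ‖L g‖ ^ 2 * α ≤ (‖L‖ * ‖g‖) ^ 2 * α := by gcongr
    _ = ‖L‖ ^ 2 * (α * ‖g‖ ^ 2) := by ring
    _ ≤ ‖L‖ ^ 2 * (⟪J g, g⟫).re := by gcongr

lemma UnifJPos.exists_le_norm_adjoint_sq {J : H →L[ℂ] H} [CompleteSpace H] {A : E →L[ℂ] H}
    (hpos : UnifJPos J (LinearMap.range (A : E →ₗ[ℂ] H)))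
    (hclosed : IsClosed (LinearMap.range (A : E →ₗ[ℂ] H) : Set H)) :
    ∃ a : ℝ, 0 < a ∧ ∀ g ∈ LinearMap.range (A : E →ₗ[ℂ] H),
      a * (⟪J g, g⟫).re ≤ ‖adjoint A (J g)‖ ^ 2 := by
  set M := LinearMap.range (A : E →ₗ[ℂ] H)
  obtain ⟨α, hα, hαM⟩ := hpos
  have : CompleteSpace M := hclosed.completeSpace_coe
  have hsurj :
      Function.Surjective (A.codRestrict M (LinearMap.mem_range_self (A : E →ₗ[ℂ] H))) :=
    fun ⟨_, x, hx⟩ => ⟨x, Subtype.ext hx⟩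
  obtain ⟨C, hC, hpre⟩ := exists_preimage_norm_le _ hsurj
  refine ⟨α / C ^ 2, by positivity, fun g hg => ?_⟩
  obtain ⟨x, hAx, hx⟩ := hpre ⟨g, hg⟩
  replace hAx : A x = g := congrArg Subtype.val hAx
  replace hx : ‖x‖ ≤ C * ‖g‖ := hx
  set s := ‖adjoint A (J g)‖
  have hform : (⟪J g, g⟫).re ≤ s * (C * ‖g‖) :=
    calc (⟪J g, g⟫).re = (⟪adjoint A (J g), x⟫).re := by rw [adjoint_inner_left, hAx]
      _ ≤ s * ‖x‖ := (Complex.re_le_norm _).trans (norm_inner_le_norm _ _)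
      _ ≤ s * (C * ‖g‖) := by gcongr
  have hαg := hαM g hg
  rw [div_mul_eq_mul_div, div_le_iff₀ (by positivity)]
  rcases (le_trans (by positivity) hαg).eq_or_lt with hzero | hr
  · rw [← hzero, mul_zero]
    positivity
  refine le_of_mul_le_mul_right ?_ hr
  calc α * (⟪J g, g⟫).re * (⟪J g, g⟫).re ≤ α * (s * (C * ‖g‖)) ^ 2 := by
        rw [mul_assoc, ← sq]; gcongr
    _ = (s * C) ^ 2 * (α * ‖g‖ ^ 2) := by ring
    _ ≤ s ^ 2 * C ^ 2 * (⟪J g, g⟫).re := by rw [mul_pow]; gcongr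

lemma UnifJPos.exists_frame_bounds {J : H →L[ℂ] H} [CompleteSpace H] {A : E →L[ℂ] H}
    (hpos : UnifJPos J (LinearMap.range (A : E →ₗ[ℂ] H)))
    (hclosed : IsClosed (LinearMap.range (A : E →ₗ[ℂ] H) : Set H)) :
    ∃ a b : ℝ, 0 < a ∧ a ≤ b ∧ ∀ g ∈ LinearMap.range (A : E →ₗ[ℂ] H),
      a * (⟪J g, g⟫).re ≤ ‖adjoint A (J g)‖ ^ 2 ∧
        ‖adjoint A (J g)‖ ^ 2 ≤ b * (⟪J g, g⟫).re := by
  obtain ⟨a, ha, hlow⟩ := hpos.exists_le_norm_adjoint_sq hclosed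
  obtain ⟨b, hup⟩ := hpos.exists_norm_sq_le (adjoint A ∘L J)
  refine ⟨a, max a b, ha, le_max_left a b, fun g hg => ⟨hlow g hg, (hup g hg).trans ?_⟩⟩
  obtain ⟨α, hα, hαM⟩ := hpos
  have hform_nonneg : 0 ≤ (⟪J g, g⟫).re := le_trans (by positivity) (hαM g hg)
  gcongr
  exact le_max_right a b

lemma IsSynthesis.adjoint_apply {I : Type*} [CompleteSpace H] {f : I → H}
    {A : lp (fun _ : I => ℂ) 2 →L[ℂ] H} (hA : IsSynthesis f A) (h : H) (i : I) :
    adjoint A h i = ⟪f i, h⟫ := by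
  rw [← hA i, ← adjoint_inner_right, lp.inner_single_left]
  simp

lemma IsSynthesis.tsum_subtype_norm_inner_sq {I : Type*} [CompleteSpace H] {f g : I → H}
    {A : lp (fun _ : I => ℂ) 2 →L[ℂ] H} (hA : IsSynthesis g A) (P : I → Prop)
    (hP : ∀ i, P i → g i = f i) (hnP : ∀ i, ¬ P i → g i = 0) (h : H) :
    ∑' i : {j // P j}, ‖⟪h, f i⟫‖ ^ 2 = ‖adjoint A h‖ ^ 2 := by
  have hnorm := lp.norm_rpow_eq_tsum (p := 2) (by norm_num) (adjoint A h)
  simp only [ENNReal.toReal_ofNat, Real.rpow_two, hA.adjoint_apply, norm_inner_symm] at hnorm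
  rw [hnorm, ← tsum_subtype_eq_of_support_subset (s := {j | P j})]
  · exact tsum_congr fun i => by rw [hP i i.2]
  · intro i hi
    by_contra hPi
    simp [hnP i hPi] at hi

end

theorem statement1_general {H I : Type*} [NormedAddCommGroup H] [InnerProductSpace ℂ H] [CompleteSpace H]
    (J : H →L[ℂ] H)
    (f : I → H) (Tp Tm : lp (fun _ : I => ℂ) 2 →L[ℂ] H)
    (hTp : IsSynthesis (fun i => if 0 ≤ (⟪J (f i), f i⟫).re then f i else 0) Tp)
    (hTm : IsSynthesis (fun i => if 0 ≤ (⟪J (f i), f i⟫).re then 0 else f i) Tm)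
    (hmaxp : MaxUnifJPos J (LinearMap.range (Tp : lp (fun _ : I => ℂ) 2 →ₗ[ℂ] H)))
    (hmaxm : MaxUnifJNeg J (LinearMap.range (Tm : lp (fun _ : I => ℂ) 2 →ₗ[ℂ] H))) :
    ∃ Bm Am Ap Bp : ℝ, Bm ≤ Am ∧ Am < 0 ∧ 0 < Ap ∧ Ap ≤ Bp ∧
      (∀ g ∈ LinearMap.range (Tp : lp (fun _ : I => ℂ) 2 →ₗ[ℂ] H),
        Ap * (⟪J g, g⟫).re ≤ ∑' i : {j : I // 0 ≤ (⟪J (f j), f j⟫).re}, ‖⟪J g, f i⟫‖ ^ 2 ∧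
          ∑' i : {j : I // 0 ≤ (⟪J (f j), f j⟫).re}, ‖⟪J g, f i⟫‖ ^ 2 ≤ Bp * (⟪J g, g⟫).re) ∧
      (∀ g ∈ LinearMap.range (Tm : lp (fun _ : I => ℂ) 2 →ₗ[ℂ] H),
        Am * (⟪J g, g⟫).re ≤ ∑' i : {j : I // ¬ 0 ≤ (⟪J (f j), f j⟫).re}, ‖⟪J g, f i⟫‖ ^ 2 ∧
          ∑' i : {j : I // ¬ 0 ≤ (⟪J (f j), f j⟫).re}, ‖⟪J g, f i⟫‖ ^ 2 ≤ Bm * (⟪J g, g⟫).re) := by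
  rw [maxUnifJNeg_iff_maxUnifJPos_neg] at hmaxm
  obtain ⟨ap, bp, hap, hapbp, hboundp⟩ := hmaxp.1.exists_frame_bounds hmaxp.isClosed
  obtain ⟨am, bm, ham, hambm, hboundm⟩ := hmaxm.1.exists_frame_bounds hmaxm.isClosed
  refine ⟨-bm, -am, ap, bp, by linarith, by linarith, hap, hapbp, fun g hg => ?_, fun g hg => ?_⟩
  · rw [hTp.tsum_subtype_norm_inner_sq _ (fun i hi => if_pos hi) (fun i hi => if_neg hi)]
    exact hboundp g hg
  · rw [hTm.tsum_subtype_norm_inner_sq _ (fun i hi => if_neg hi)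
      (fun i hi => if_pos (not_not.mp hi))]
    have hbound := hboundm g hg
    simp only [neg_apply, map_neg, norm_neg, inner_neg_left, Complex.neg_re] at hbound
    constructor <;> linarith

/-- the positive/negative subfamilies of a `J`-frame are frames for the Hilbert
spaces `(M₊, [·,·])` and `(M₋, -[·,·])`. -/
theorem statement1 {H I : Type*} [NormedAddCommGroup H] [InnerProductSpace ℂ H] [CompleteSpace H]
    (J : H →L[ℂ] H) (hJsa : IsSelfAdjoint J) (hJsq : J ∘L J = 1)
    (f : I → H) (T Tp Tm : lp (fun _ : I => ℂ) 2 →L[ℂ] H)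
    (hT : IsSynthesis f T)
    (hTp : IsSynthesis (fun i => if 0 ≤ (⟪J (f i), f i⟫).re then f i else 0) Tp)
    (hTm : IsSynthesis (fun i => if 0 ≤ (⟪J (f i), f i⟫).re then 0 else f i) Tm)
    (hmaxp : MaxUnifJPos J (LinearMap.range (Tp : lp (fun _ : I => ℂ) 2 →ₗ[ℂ] H)))
    (hmaxm : MaxUnifJNeg J (LinearMap.range (Tm : lp (fun _ : I => ℂ) 2 →ₗ[ℂ] H))) :
    ∃ Bm Am Ap Bp : ℝ, Bm ≤ Am ∧ Am < 0 ∧ 0 < Ap ∧ Ap ≤ Bp ∧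
      (∀ g ∈ LinearMap.range (Tp : lp (fun _ : I => ℂ) 2 →ₗ[ℂ] H),
        Ap * (⟪J g, g⟫).re ≤ ∑' i : {j : I // 0 ≤ (⟪J (f j), f j⟫).re}, ‖⟪J g, f i⟫‖ ^ 2 ∧
          ∑' i : {j : I // 0 ≤ (⟪J (f j), f j⟫).re}, ‖⟪J g, f i⟫‖ ^ 2 ≤ Bp * (⟪J g, g⟫).re) ∧
      (∀ g ∈ LinearMap.range (Tm : lp (fun _ : I => ℂ) 2 →ₗ[ℂ] H),
        Am * (⟪J g, g⟫).re ≤ ∑' i : {j : I // ¬ 0 ≤ (⟪J (f j), f j⟫).re}, ‖⟪J g, f i⟫‖ ^ 2 ∧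
          ∑' i : {j : I // ¬ 0 ≤ (⟪J (f j), f j⟫).re}, ‖⟪J g, f i⟫‖ ^ 2 ≤ Bm * (⟪J g, g⟫).re) :=
  statement1_general J f Tp Tm hTp hTm hmaxp hmaxm

end KreinFrames
end
end

section
/- Let F = (f_i)_{i∈I} be a Bessel family in a Krein space H, let M be the closed linear span of {f_i : i ∈ I} and N = M ∩ M^{[⊥]}. Assume that F is a frame for the Hilbert space (M, ⟨·,·⟩) and that M ⊖ N := M ∩ N^⊥ is a uniformly J-positive subspace of H. Then there exist constants 0 < A ≤ B such that A[f,f] ≤ Σ_{i∈I} |[f, f_i]|² ≤ B[f,f] for every f ∈ M. -/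
/- Frames for Krein spaces ("J-frames"), following Giribet–Maestripieri–Martínez Pería–Massey.

A Krein space is modelled as a complex Hilbert space `H` together with a fundamental symmetry
`J : H →L[ℂ] H` (selfadjoint, `J ∘L J = 1`); the indefinite inner product is `[x,y] = ⟪J x, y⟫`. -/

/-! Write `g ∈ M` as `m + n` with `n ∈ N` and `m ∈ M ⊖ N`. As `n` is `J`-orthogonal to `M`,
`[g, g] = [m, m]` and `[g, f i] = [m, f i] = ⟪P_M (J m), f i⟫`. Uniform positivity gives
`α ‖m‖² ≤ [m, m] = ⟪P_M (J m), m⟫ ≤ ‖P_M (J m)‖ ‖m‖`, and since `J` is unitary,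
`‖P_M (J m)‖ ≤ ‖m‖` and `[m, m] ≤ ‖m‖²`. The Hilbert frame bounds applied to `P_M (J m) ∈ M`
then give `A' α² [g, g] ≤ ∑ |[g, f i]|² ≤ (B' / α) [g, g]`. -/

noncomputable section

open scoped ComplexInnerProductSpace ComplexOrder
open ContinuousLinearMap

attribute [local instance] Classical.propDecidable

namespace KreinFrames

universe u

variable {H : Type*} [NormedAddCommGroup H] [InnerProductSpace ℂ H]

section Projection

variable {𝕜 E : Type*} [RCLike 𝕜] [NormedAddCommGroup E] [InnerProductSpace 𝕜 E]
  (K : Submodule 𝕜 E) [K.HasOrthogonalProjection]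

theorem _root_.Submodule.inner_starProjection_left_of_mem (x : E) {y : E} (hy : y ∈ K) :
    inner 𝕜 (K.starProjection x) y = inner 𝕜 x y := by
  rw [K.inner_starProjection_left_eq_right, K.starProjection_eq_self_iff.2 hy]

theorem _root_.Submodule.tsum_norm_inner_starProjection_sq {I : Type*} {f : I → E}
    (hf : ∀ i, f i ∈ K) (x : E) :
    ∑' i, ‖inner 𝕜 (K.starProjection x) (f i)‖ ^ 2 = ∑' i, ‖inner 𝕜 x (f i)‖ ^ 2 :=
  tsum_congr fun i => by rw [K.inner_starProjection_left_of_mem x (hf i)]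

theorem _root_.Submodule.mul_norm_le_norm_starProjection {x m : E} {α : ℝ} (hm : m ∈ K)
    (h : α * ‖m‖ ^ 2 ≤ RCLike.re (inner 𝕜 x m)) : α * ‖m‖ ≤ ‖K.starProjection x‖ := by
  rcases (norm_nonneg m).eq_or_lt with hm0 | hm0
  · rw [← hm0, mul_zero]
    exact norm_nonneg _
  refine le_of_mul_le_mul_right ?_ hm0
  calc α * ‖m‖ * ‖m‖ = α * ‖m‖ ^ 2 := by ring
    _ ≤ RCLike.re (inner 𝕜 (K.starProjection x) m) := by
      rwa [K.inner_starProjection_left_of_mem x hm]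
    _ ≤ ‖K.starProjection x‖ * ‖m‖ := (RCLike.re_le_norm _).trans (norm_inner_le_norm _ _)

end Projection

theorem Jorth_eq_comap_orthogonal (J : H →L[ℂ] H) (M : Submodule ℂ H) :
    Jorth J M = (Mᗮ).comap (J : H →ₗ[ℂ] H) := by
  ext x
  exact (Submodule.mem_orthogonal' M (J x)).symm

theorem isClosed_Jorth (J : H →L[ℂ] H) (M : Submodule ℂ H) : IsClosed (Jorth J M : Set H) := by
  rw [Jorth_eq_comap_orthogonal]
  exact M.isClosed_orthogonal.preimage J.continuous

section FundamentalSymmetry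

variable [CompleteSpace H] {J : H →L[ℂ] H}

theorem mem_unitary_of_isSelfAdjoint (hJsa : IsSelfAdjoint J) (hJsq : J ∘L J = 1) :
    J ∈ unitary (H →L[ℂ] H) :=
  Unitary.mem_iff.2 ⟨by rw [hJsa.star_eq]; exact hJsq, by rw [hJsa.star_eq]; exact hJsq⟩

theorem re_inner_apply_self_le (hJsa : IsSelfAdjoint J) (hJsq : J ∘L J = 1) (x : H) :
    (⟪J x, x⟫).re ≤ ‖x‖ ^ 2 :=
  calc (⟪J x, x⟫).re ≤ ‖J x‖ * ‖x‖ := (Complex.re_le_norm _).trans (norm_inner_le_norm _ _)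
    _ = ‖x‖ ^ 2 := by rw [norm_map_of_mem_unitary (mem_unitary_of_isSelfAdjoint hJsa hJsq), sq]

theorem exists_mem_inf_orthogonal_inner_eq (hJsa : IsSelfAdjoint J) {M : Submodule ℂ H}
    [(M ⊓ Jorth J M).HasOrthogonalProjection] {g : H} (hg : g ∈ M) :
    ∃ m ∈ M ⊓ (M ⊓ Jorth J M)ᗮ, (∀ y ∈ M, ⟪J g, y⟫ = ⟪J m, y⟫) ∧ ⟪J g, g⟫ = ⟪J m, m⟫ := by
  set N := M ⊓ Jorth J M
  set n := N.starProjection g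
  obtain ⟨hnM, hnJ⟩ : n ∈ N := N.starProjection_apply_mem g
  have hm : g - n ∈ M ⊓ Nᗮ := ⟨M.sub_mem hg hnM, N.sub_starProjection_mem_orthogonal g⟩
  have hJg : ∀ y ∈ M, ⟪J g, y⟫ = ⟪J (g - n), y⟫ := fun y hy => by
    rw [map_sub, inner_sub_left, hnJ y hy, sub_zero]
  have hmn : ⟪J (g - n), n⟫ = 0 := by
    have hsymm := hJsa.isSymmetric n (g - n)
    simp only [ContinuousLinearMap.coe_coe] at hsymm
    rw [← inner_conj_symm, ← hsymm, hnJ _ hm.1, map_zero]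
  refine ⟨g - n, hm, hJg, ?_⟩
  calc ⟪J g, g⟫ = ⟪J (g - n), (g - n) + n⟫ := by rw [hJg g hg, sub_add_cancel]
    _ = ⟪J (g - n), g - n⟫ := by rw [inner_add_right, hmn, add_zero]

variable {I : Type*} {f : I → H} {M : Submodule ℂ H} [M.HasOrthogonalProjection] {α : ℝ} {m : H}

theorem mul_re_inner_le_tsum_of_frame_lower (hJsa : IsSelfAdjoint J) (hJsq : J ∘L J = 1)
    (hfM : ∀ i, f i ∈ M) (hm : m ∈ M) (hαm : α * ‖m‖ ^ 2 ≤ (⟪J m, m⟫).re) (hα : 0 ≤ α)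
    {A' : ℝ} (hA' : 0 ≤ A') (hlower : ∀ g ∈ M, A' * ‖g‖ ^ 2 ≤ ∑' i, ‖⟪g, f i⟫‖ ^ 2) :
    A' * α ^ 2 * (⟪J m, m⟫).re ≤ ∑' i, ‖⟪J m, f i⟫‖ ^ 2 :=
  calc A' * α ^ 2 * (⟪J m, m⟫).re ≤ A' * (α * ‖m‖) ^ 2 := by
        rw [mul_pow, ← mul_assoc]
        gcongr
        exact re_inner_apply_self_le hJsa hJsq m
    _ ≤ A' * ‖M.starProjection (J m)‖ ^ 2 := by
        gcongr
        exact M.mul_norm_le_norm_starProjection hm hαm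
    _ ≤ ∑' i, ‖⟪J m, f i⟫‖ ^ 2 := by
        rw [← M.tsum_norm_inner_starProjection_sq hfM]
        exact hlower _ (M.starProjection_apply_mem _)

theorem tsum_le_div_mul_re_inner_of_frame_upper (hJsa : IsSelfAdjoint J) (hJsq : J ∘L J = 1)
    (hfM : ∀ i, f i ∈ M) (hαm : α * ‖m‖ ^ 2 ≤ (⟪J m, m⟫).re) (hα : 0 < α)
    {B' : ℝ} (hB' : 0 ≤ B') (hupper : ∀ g ∈ M, ∑' i, ‖⟪g, f i⟫‖ ^ 2 ≤ B' * ‖g‖ ^ 2) :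
    ∑' i, ‖⟪J m, f i⟫‖ ^ 2 ≤ B' / α * (⟪J m, m⟫).re :=
  calc ∑' i, ‖⟪J m, f i⟫‖ ^ 2 ≤ B' * ‖M.starProjection (J m)‖ ^ 2 := by
        rw [← M.tsum_norm_inner_starProjection_sq hfM]
        exact hupper _ (M.starProjection_apply_mem _)
    _ ≤ B' * ‖m‖ ^ 2 := by
        gcongr
        rw [← norm_map_of_mem_unitary (mem_unitary_of_isSelfAdjoint hJsa hJsq) m]
        exact M.norm_starProjection_apply_le _
    _ = B' / α * (α * ‖m‖ ^ 2) := by field_simp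
    _ ≤ B' / α * (⟪J m, m⟫).re := by gcongr

end FundamentalSymmetry

theorem statement4_general {H I : Type*} [NormedAddCommGroup H] [InnerProductSpace ℂ H] [CompleteSpace H]
    (J : H →L[ℂ] H) (hJsa : IsSelfAdjoint J) (hJsq : J ∘L J = 1)
    (f : I → H)
    (M N : Submodule ℂ H)
    (hM : M = (Submodule.span ℂ (Set.range f)).topologicalClosure)
    (hN : N = M ⊓ Jorth J M)
    (A' B' : ℝ) (hA' : 0 < A') (hA'B' : A' ≤ B')
    (hframe : ∀ g ∈ M, A' * ‖g‖ ^ 2 ≤ ∑' i, ‖⟪g, f i⟫‖ ^ 2 ∧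
      ∑' i, ‖⟪g, f i⟫‖ ^ 2 ≤ B' * ‖g‖ ^ 2)
    (hMN : UnifJPos J (M ⊓ Nᗮ)) :
    ∃ A B : ℝ, 0 < A ∧ A ≤ B ∧ ∀ g ∈ M,
      A * (⟪J g, g⟫).re ≤ ∑' i, ‖⟪J g, f i⟫‖ ^ 2 ∧
        ∑' i, ‖⟪J g, f i⟫‖ ^ 2 ≤ B * (⟪J g, g⟫).re := by
  obtain ⟨α, hα, hαMN⟩ := hMN
  have hMc : IsClosed (M : Set H) := hM ▸ Submodule.isClosed_topologicalClosure _
  have hfM : ∀ i, f i ∈ M := fun i =>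
    hM ▸ Submodule.le_topologicalClosure _ (Submodule.subset_span ⟨i, rfl⟩)
  have : CompleteSpace M := hMc.completeSpace_coe
  have : CompleteSpace ↥(M ⊓ Jorth J M) := (hMc.inter (isClosed_Jorth J M)).completeSpace_coe
  subst hN
  have hB' : 0 < B' := hA'.trans_le hA'B'
  -- `α ≤ 1` need not hold (e.g. if `M ⊖ N = 0`), so `A' α² ≤ B' / α` is not automatic.
  refine ⟨min (A' * α ^ 2) (B' / α), B' / α, lt_min (by positivity) (by positivity),
    min_le_right _ _, fun g hg => ?_⟩
  obtain ⟨m, hmMN, hJg, hgg⟩ := exists_mem_inf_orthogonal_inner_eq hJsa hg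
  have hαm := hαMN m hmMN
  rw [tsum_congr fun i => by rw [hJg _ (hfM i)], hgg]
  constructor
  · calc min (A' * α ^ 2) (B' / α) * (⟪J m, m⟫).re ≤ A' * α ^ 2 * (⟪J m, m⟫).re := by
          gcongr
          · exact (by positivity : 0 ≤ α * ‖m‖ ^ 2).trans hαm
          · exact min_le_left _ _
      _ ≤ ∑' i, ‖⟪J m, f i⟫‖ ^ 2 :=
          mul_re_inner_le_tsum_of_frame_lower hJsa hJsq hfM hmMN.1 hαm hα.le hA'.le
            fun g hg => (hframe g hg).1
  · exact tsum_le_div_mul_re_inner_of_frame_upper hJsa hJsq hfM hαm hα hB'.le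
      fun g hg => (hframe g hg).2

/-- conversely, if a Bessel family is a frame for the Hilbert space `(M, ⟨·,·⟩)`
and `M ⊖ N` is uniformly `J`-positive, then the indefinite frame inequalities hold on `M`. -/
theorem statement4 {H I : Type*} [NormedAddCommGroup H] [InnerProductSpace ℂ H] [CompleteSpace H]
    (J : H →L[ℂ] H) (hJsa : IsSelfAdjoint J) (hJsq : J ∘L J = 1)
    (f : I → H) (B0 : ℝ) (hB0 : 0 < B0)
    (hBessel : ∀ g : H, ∑' i, ‖⟪g, f i⟫‖ ^ 2 ≤ B0 * ‖g‖ ^ 2)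
    (M N : Submodule ℂ H)
    (hM : M = (Submodule.span ℂ (Set.range f)).topologicalClosure)
    (hN : N = M ⊓ Jorth J M)
    (A' B' : ℝ) (hA' : 0 < A') (hA'B' : A' ≤ B')
    (hframe : ∀ g ∈ M, A' * ‖g‖ ^ 2 ≤ ∑' i, ‖⟪g, f i⟫‖ ^ 2 ∧
      ∑' i, ‖⟪g, f i⟫‖ ^ 2 ≤ B' * ‖g‖ ^ 2)
    (hMN : UnifJPos J (M ⊓ Nᗮ)) :
    ∃ A B : ℝ, 0 < A ∧ A ≤ B ∧ ∀ g ∈ M,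
      A * (⟪J g, g⟫).re ≤ ∑' i, ‖⟪J g, f i⟫‖ ^ 2 ∧
        ∑' i, ‖⟪J g, f i⟫‖ ^ 2 ≤ B * (⟪J g, g⟫).re :=
  statement4_general J hJsa hJsq f M N hM hN A' B' hA' hA'B' hframe hMN

end KreinFrames
end
end
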